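/- arXiv:1306.3969 — 3 statements merged into one kernel-verified Lean document; each statement's English description precedes it below -/
import Mathlib

section
/- Let A, B be Hermitian positive semidefinite matrices and M Hermitian positive definite. Then the second derivative of δ ↦ tr((M + δB)^{-1} A) at δ = 0 equals 2·tr((B M^{-1} B)(M^{-1} A M^{-1})), which is nonnegative. Hence δ ↦ tr((M+δB)^{-1}A) is convex for δ ≥ 0. -/
/-!
Put `X δ = (M + δ B)⁻¹`. Differentiating `X (M + δ B) = 1` gives `X' = -X B X`, hence for
`f δ = tr (X A)` we get `f' = -tr (X B X A)` and `f'' = 2 tr (X B X B X A) = 2 tr ((B X B) (X A X))`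
by cyclicity of the trace. For `δ ≥ 0` the matrix `X` is positive definite, so `B X B` and
`X A X` are positive semidefinite, and the trace of a product of two positive semidefinite
matrices is nonnegative (it equals `tr (√P Q √P)`). Thus `f'' ≥ 0` on `[0, ∞)`.
-/

open ComplexOrder Filter Topology

theorem HasDerivAt.re {𝕜 : Type*} [RCLike 𝕜] {f : ℝ → 𝕜} {f' : 𝕜} {x : ℝ}
    (h : HasDerivAt f f' x) : HasDerivAt (fun t => RCLike.re (f t)) (RCLike.re f') x :=
  RCLike.reCLM.hasFDerivAt.comp_hasDerivAt (f := f) x h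

namespace Matrix

variable {𝕜 ι : Type*} [RCLike 𝕜] [Fintype ι]

open scoped MatrixOrder in
lemma PosSemidef.trace_mul_nonneg {P Q : Matrix ι ι 𝕜} (hP : P.PosSemidef) (hQ : Q.PosSemidef) :
    0 ≤ (P * Q).trace := by
  classical
  set S := CFC.sqrt P
  have hS : Sᴴ = S := (nonneg_iff_posSemidef.mp (CFC.sqrt_nonneg P)).isHermitian.eq
  calc (0 : 𝕜) ≤ (Sᴴ * Q * S).trace := (hQ.conjTranspose_mul_mul_same S).trace_nonneg
    _ = (P * Q).trace := by
      rw [hS, trace_mul_comm, ← mul_assoc, CFC.sqrt_mul_sqrt_self P hP.nonneg]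

lemma PosSemidef.trace_conj_mul_conj_nonneg {A B X : Matrix ι ι 𝕜} (hA : A.PosSemidef)
    (hB : B.PosSemidef) (hX : X.PosSemidef) : 0 ≤ ((B * X * B) * (X * A * X)).trace := by
  have hBXB := hX.conjTranspose_mul_mul_same B
  have hXAX := hA.conjTranspose_mul_mul_same X
  rw [hB.isHermitian.eq] at hBXB
  rw [hX.isHermitian.eq] at hXAX
  exact hBXB.trace_mul_nonneg hXAX

section

attribute [local instance] Matrix.normedAddCommGroup Matrix.normedSpace

theorem _root_.HasDerivAt.trace_mul_right {X : ℝ → Matrix ι ι 𝕜} {X' : Matrix ι ι 𝕜} {δ : ℝ}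
    (h : HasDerivAt X X' δ) (A : Matrix ι ι 𝕜) :
    HasDerivAt (fun t => (X t * A).trace) (X' * A).trace δ :=
  (traceLinearMap ι ℝ 𝕜 ∘ₗ LinearMap.mulRight ℝ A).toContinuousLinearMap.hasFDerivAt
    |>.comp_hasDerivAt δ h

end

section Deriv

variable [DecidableEq ι]

-- Any normed ring structure serves to differentiate `Ring.inverse`; this one induces the product
-- topology definitionally, so the statements below are about the usual topology on matrices.
attribute [local instance] Matrix.linftyOpNormedRing Matrix.linftyOpNormedAlgebra

variable (A B M : Matrix ι ι 𝕜) {δ : ℝ}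

lemma isOpen_setOf_isUnit_add_smul : IsOpen {t : ℝ | IsUnit (M + (t : 𝕜) • B)} :=
  Units.isOpen.preimage (by fun_prop)

lemma hasDerivAt_inv_add_smul (h : IsUnit (M + (δ : 𝕜) • B)) :
    HasDerivAt (fun t : ℝ => (M + (t : 𝕜) • B)⁻¹)
      (-((M + (δ : 𝕜) • B)⁻¹ * B * (M + (δ : 𝕜) • B)⁻¹)) δ := by
  have hline : HasDerivAt (fun t : ℝ => M + (t : 𝕜) • B) B δ := by
    have := ((hasDerivAt_id δ).smul_const B).const_add M
    simp only [id, one_smul, RCLike.real_smul_eq_coe_smul (K := 𝕜), RCLike.ofReal_one] at this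
    exact this
  have := (hasFDerivAt_ringInverse (𝕜 := ℝ) h.unit).comp_hasDerivAt δ hline
  simp only [Function.comp_def, ← nonsing_inv_eq_ringInverse, coe_units_inv] at this
  exact this

lemma hasDerivAt_trace_inv_add_smul_mul (h : IsUnit (M + (δ : 𝕜) • B)) :
    HasDerivAt (fun t : ℝ => ((M + (t : 𝕜) • B)⁻¹ * A).trace)
      (-((M + (δ : 𝕜) • B)⁻¹ * B * (M + (δ : 𝕜) • B)⁻¹ * A).trace) δ := by
  simpa [neg_mul] using (hasDerivAt_inv_add_smul B M h).trace_mul_right A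

lemma hasDerivAt_neg_trace_inv_mul_inv_mul (h : IsUnit (M + (δ : 𝕜) • B)) :
    HasDerivAt (fun t : ℝ => -((M + (t : 𝕜) • B)⁻¹ * B * (M + (t : 𝕜) • B)⁻¹ * A).trace)
      (2 * ((B * (M + (δ : 𝕜) • B)⁻¹ * B) *
        ((M + (δ : 𝕜) • B)⁻¹ * A * (M + (δ : 𝕜) • B)⁻¹)).trace) δ := by
  set X := (M + (δ : 𝕜) • B)⁻¹
  have hX := hasDerivAt_inv_add_smul B M h
  have hXBX : HasDerivAt (fun t : ℝ => (M + (t : 𝕜) • B)⁻¹ * B * (M + (t : 𝕜) • B)⁻¹)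
      (-(X * B * X) * B * X + X * B * -(X * B * X)) δ := (hX.mul_const B).mul hX
  refine (hXBX.trace_mul_right A).neg.congr_deriv ?_
  calc -((-(X * B * X) * B * X + X * B * -(X * B * X)) * A).trace
      = (X * ((B * X * B) * (X * A)) + X * ((B * X * B) * (X * A))).trace := by
        rw [← trace_neg]; congr 1; noncomm_ring
    _ = 2 * ((B * X * B) * (X * A * X)).trace := by
        rw [trace_add, ← two_mul, trace_mul_comm, Matrix.mul_assoc]

lemma deriv_deriv_trace_inv_add_smul_mul (h : IsUnit (M + (δ : 𝕜) • B)) :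
    deriv (deriv fun t : ℝ => ((M + (t : 𝕜) • B)⁻¹ * A).trace) δ = 2 *
      ((B * (M + (δ : 𝕜) • B)⁻¹ * B) * ((M + (δ : 𝕜) • B)⁻¹ * A * (M + (δ : 𝕜) • B)⁻¹)).trace := by
  have hderiv : deriv (fun t : ℝ => ((M + (t : 𝕜) • B)⁻¹ * A).trace) =ᶠ[𝓝 δ]
      fun t => -((M + (t : 𝕜) • B)⁻¹ * B * (M + (t : 𝕜) • B)⁻¹ * A).trace := by
    filter_upwards [(isOpen_setOf_isUnit_add_smul B M).mem_nhds h] with t ht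
    exact (hasDerivAt_trace_inv_add_smul_mul A B M ht).deriv
  rw [hderiv.deriv_eq]
  exact (hasDerivAt_neg_trace_inv_mul_inv_mul A B M h).deriv

end Deriv

lemma convexOn_re_trace_inv_add_smul_mul [DecidableEq ι] {A B M : Matrix ι ι 𝕜}
    (hA : A.PosSemidef) (hB : B.PosSemidef) (hM : M.PosDef) :
    ConvexOn ℝ (Set.Ici 0) fun δ : ℝ => RCLike.re ((M + (δ : 𝕜) • B)⁻¹ * A).trace := by
  have hPD (δ : ℝ) (hδ : δ ∈ Set.Ici 0) : (M + (δ : 𝕜) • B).PosDef :=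
    hM.add_posSemidef (hB.smul (RCLike.ofReal_nonneg.mpr hδ))
  have hf' (δ : ℝ) (hδ : δ ∈ Set.Ici 0) :=
    (hasDerivAt_trace_inv_add_smul_mul A B M (hPD δ hδ).isUnit).re
  have hf'' (δ : ℝ) (hδ : δ ∈ Set.Ici 0) :=
    (hasDerivAt_neg_trace_inv_mul_inv_mul A B M (hPD δ hδ).isUnit).re
  refine convexOn_of_hasDerivWithinAt2_nonneg (convex_Ici 0)
    (fun δ hδ => (hf' δ hδ).continuousAt.continuousWithinAt)
    (fun δ hδ => (hf' δ (interior_subset hδ)).hasDerivWithinAt)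
    (fun δ hδ => (hf'' δ (interior_subset hδ)).hasDerivWithinAt) fun δ hδ => ?_
  have := hA.trace_conj_mul_conj_nonneg hB (hPD δ (interior_subset hδ)).posSemidef.inv
  simpa using (RCLike.nonneg_iff.mp this).1

end Matrix

theorem trace_inv_second_deriv_convex {n : ℕ} (A B M : Matrix (Fin n) (Fin n) ℂ)
    (hA : A.PosSemidef) (hB : B.PosSemidef) (hM : M.PosDef) :
    deriv (deriv (fun δ : ℝ => ((M + (δ : ℂ) • B)⁻¹ * A).trace)) 0
      = 2 * ((B * M⁻¹ * B) * (M⁻¹ * A * M⁻¹)).trace ∧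
    0 ≤ ((B * M⁻¹ * B) * (M⁻¹ * A * M⁻¹)).trace.re ∧
    ConvexOn ℝ (Set.Ici 0) (fun δ : ℝ => (((M + (δ : ℂ) • B)⁻¹ * A).trace).re) := by
  refine ⟨?_, ?_, Matrix.convexOn_re_trace_inv_add_smul_mul hA hB hM⟩
  · simpa using Matrix.deriv_deriv_trace_inv_add_smul_mul A B M (δ := 0)
      (by simpa using hM.isUnit)
  · exact (RCLike.nonneg_iff.mp (hA.trace_conj_mul_conj_nonneg hB hM.posSemidef.inv)).1
end

section
/- Suppose A and B are n×n Hermitian positive semidefinite matrices such that A + B is positive definite, C is Hermitian, and z = (z_1, z_2) satisfies det(z_1 A + z_2 B + C + t_1 A + t_2 B) > 0 for all t_1, t_2 ≥ 0. Then the matrix M = z_1 A + z_2 B + C is positive definite. -/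
/-!
Restrict to the diagonal `t₁ = t₂ = t`. Write `M = z₁A + z₂B + C` and `P = A + B = R⋆R` with
`R` invertible. Congruence by `R⁻¹` turns `M + tP` into `K + t`, where `K = R⁻⋆ M R⁻¹` is
Hermitian. If `K` had an eigenvalue `λ ≤ 0`, then `det (M - λP) = 0`, contradicting the
hypothesis at `t = -λ`. So `K`, and with it `M = R⋆ K R`, is positive definite.
-/

open ComplexOrder

namespace Matrix

variable {𝕜 n : Type*} [RCLike 𝕜] [Fintype n] [DecidableEq n]

theorem IsHermitian.det_sub_eigenvalue_smul_one_eq_zero {K : Matrix n n 𝕜} (hK : K.IsHermitian)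
    (i : n) : (K - hK.eigenvalues i • (1 : Matrix n n 𝕜)).det = 0 := by
  refine exists_mulVec_eq_zero_iff.mp ⟨hK.eigenvectorBasis i, ?_, ?_⟩
  · simpa using hK.eigenvectorBasis.toBasis.ne_zero i
  · rw [sub_mulVec, hK.mulVec_eigenvectorBasis, smul_mulVec, one_mulVec, sub_self]

theorem IsHermitian.posDef_of_det_add_smul_one_ne_zero {K : Matrix n n 𝕜} (hK : K.IsHermitian)
    (hdet : ∀ t : ℝ, 0 ≤ t → (K + t • 1).det ≠ 0) : K.PosDef := by
  refine hK.posDef_iff_eigenvalues_pos.mpr fun i ↦ ?_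
  by_contra! hle
  apply hdet (-hK.eigenvalues i) (neg_nonneg.mpr hle)
  rw [neg_smul, ← sub_eq_add_neg]
  exact hK.det_sub_eigenvalue_smul_one_eq_zero i

open scoped MatrixOrder in
theorem PosDef.exists_isUnit_eq_star_mul_self {P : Matrix n n 𝕜} (hP : P.PosDef) :
    ∃ R : Matrix n n 𝕜, IsUnit R ∧ P = star R * R := by
  obtain ⟨R, rfl⟩ := CStarAlgebra.nonneg_iff_eq_star_mul_self.mp hP.posSemidef.nonneg
  exact ⟨R, isUnit_of_mul_isUnit_right hP.isUnit, rfl⟩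

theorem IsHermitian.posDef_of_det_add_smul_ne_zero {M P : Matrix n n 𝕜} (hM : M.IsHermitian)
    (hP : P.PosDef) (hdet : ∀ t : ℝ, 0 ≤ t → (M + t • P).det ≠ 0) : M.PosDef := by
  obtain ⟨R, hR, rfl⟩ := hP.exists_isUnit_eq_star_mul_self
  have hRR : R * R⁻¹ = 1 := mul_nonsing_inv R ((isUnit_iff_isUnit_det R).mp hR)
  have hU : IsUnit R⁻¹ := isUnit_nonsing_inv_iff.mpr hR
  have hcongr (t : ℝ) :
      star R⁻¹ * (M + t • (star R * R)) * R⁻¹ = star R⁻¹ * M * R⁻¹ + t • 1 := by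
    have hone : star R⁻¹ * (star R * R) * R⁻¹ = 1 := by
      rw [← mul_assoc, ← star_mul, mul_assoc, hRR, star_one, one_mul]
    rw [mul_add, add_mul, mul_smul_comm, smul_mul_assoc, hone]
  have hK : (star R⁻¹ * M * R⁻¹).IsHermitian := isHermitian_conjTranspose_mul_mul R⁻¹ hM
  rw [← IsUnit.posDef_star_left_conjugate_iff hU]
  refine hK.posDef_of_det_add_smul_one_ne_zero fun t ht ↦ ?_
  rw [← hcongr, det_mul, det_mul]
  have hdetU := (isUnit_iff_isUnit_det _).mp hU
  have hdetU' := (isUnit_iff_isUnit_det _).mp hU.star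
  exact mul_ne_zero (mul_ne_zero hdetU'.ne_zero (hdet t ht)) hdetU.ne_zero

end Matrix

theorem above_roots_posDef {n : ℕ} (A B Cm : Matrix (Fin n) (Fin n) ℂ)
    (hA : A.PosSemidef) (hB : B.PosSemidef) (hAB : (A + B).PosDef) (hC : Cm.IsHermitian)
    (z1 z2 : ℝ)
    (habove : ∀ t1 t2 : ℝ, 0 ≤ t1 → 0 ≤ t2 →
      0 < ((((z1 + t1 : ℝ) : ℂ)) • A + (((z2 + t2 : ℝ) : ℂ)) • B + Cm).det.re) :
    ((z1 : ℂ) • A + (z2 : ℂ) • B + Cm).PosDef := by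
  have hM : ((z1 : ℂ) • A + (z2 : ℂ) • B + Cm).IsHermitian :=
    ((hA.isHermitian.smul (Complex.conj_ofReal z1)).add
      (hB.isHermitian.smul (Complex.conj_ofReal z2))).add hC
  refine hM.posDef_of_det_add_smul_ne_zero hAB fun t ht hzero ↦ ?_
  have hshift : (z1 : ℂ) • A + (z2 : ℂ) • B + Cm + t • (A + B)
      = (((z1 + t : ℝ) : ℂ)) • A + (((z2 + t : ℝ) : ℂ)) • B + Cm := by
    push_cast
    module
  have hpos := habove t t ht ht
  rw [← hshift, hzero, Complex.zero_re] at hpos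
  exact hpos.false
end

section
/- For a smooth function p with p(z) ≠ 0, and writing Φ^i = (∂_i p)/p, the following identity holds wherever Φ^j ≠ 1: the barrier function of p - ∂_j p in direction i equals Φ^i - (∂_j Φ^i)/(1 - Φ^j), i.e., ∂_i(p - ∂_j p)/(p - ∂_j p) = Φ^i_p - (∂_j Φ^i_p)/(1 - Φ^j_p). -/
open MvPolynomial

theorem MvPolynomial.pderiv_pderiv_comm {R σ : Type*} [CommSemiring R] (i j : σ)
    (p : MvPolynomial σ R) : pderiv i (pderiv j p) = pderiv j (pderiv i p) := by
  induction p using MvPolynomial.induction_on with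
  | C a => simp
  | add q r hq hr => simp only [map_add, hq, hr]
  | mul_X q k hq =>
      have hX (a b : σ) : pderiv a (pderiv b (X k : MvPolynomial σ R)) = 0 := by
        classical simp [pderiv_X, Pi.single_apply, apply_ite]
      simp only [pderiv_mul, map_add, hq, hX]
      ring

/-- With `a, b, c, d` the values of `p, ∂ᵢp, ∂ⱼ∂ᵢp, ∂ⱼp`, this is the barrier identity. -/
theorem sub_div_sub_eq_div_sub_div_one_sub {K : Type*} [Field K] {a b c d : K} (ha : a ≠ 0)
    (hd : d / a ≠ 1) :
    (b - c) / (a - d) = b / a - (c / a - b / a * (d / a)) / (1 - d / a) := by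
  have had : a - d ≠ 0 := fun h => hd (by rw [← sub_eq_zero.mp h, div_self ha])
  have hd' : 1 - d / a ≠ 0 := sub_ne_zero.mpr (Ne.symm hd)
  field_simp
  ring

theorem barrier_identity {m : ℕ} (p : MvPolynomial (Fin m) ℝ) (z : Fin m → ℝ) (i j : Fin m)
    (hp : eval z p ≠ 0) (hb : eval z (pderiv j p) / eval z p ≠ 1) :
    eval z (pderiv i (p - pderiv j p)) / eval z (p - pderiv j p)
      = eval z (pderiv i p) / eval z p
        - (eval z (pderiv j (pderiv i p)) / eval z p
            - (eval z (pderiv i p) / eval z p) * (eval z (pderiv j p) / eval z p))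
          / (1 - eval z (pderiv j p) / eval z p) := by
  rw [map_sub, pderiv_pderiv_comm, map_sub, map_sub]
  exact sub_div_sub_eq_div_sub_div_one_sub hp hb
end
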